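/- Energy conservation for Lagrange-Dirac systems: let L : ℝ^n × ℝ^n → ℝ be differentiable, let Δ : ℝ^n → Submodule(ℝ, ℝ^n) assign a linear subspace of ℝ^n to each point, and let q, v, p : ℝ → ℝ^n be differentiable curves such that for every t: p(t) = ∂L/∂v(q(t),v(t)); q'(t) = v(t); v(t) ∈ Δ(q(t)); and (p'(t) − ∂L/∂q(q(t),v(t)))·u = 0 for all u ∈ Δ(q(t)). Then the generalized energy t ↦ p(t)·v(t) − L(q(t),v(t)) is constant. -/

import Mathlib

/-!
Along any curve with `q' = v`, the chain rule gives
`d/dt (p·v − L(q,v)) = (p' − ∂L/∂q)·v + (p − ∂L/∂v)·v'`.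
The Legendre condition kills the second term, and the Lagrange–d'Alembert equation tested
against the admissible velocity `v ∈ Δ(q)` kills the first, so the energy has derivative zero.
-/

open scoped BigOperators

/-- The dot product on `ℝ^k`. -/
def dot {k : ℕ} (x y : Fin k → ℝ) : ℝ := ∑ i, x i * y i

section

variable {k : ℕ}

lemma dot_eq_dotProduct (x y : Fin k → ℝ) : dot x y = x ⬝ᵥ y := rfl

lemma sub_dot (x y z : Fin k → ℝ) : dot (x - y) z = dot x z - dot y z := by
  simp only [dot_eq_dotProduct, sub_dotProduct]

lemma hasDerivAt_dot {x y : ℝ → Fin k → ℝ} {x' y' : Fin k → ℝ} {t : ℝ}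
    (hx : HasDerivAt x x' t) (hy : HasDerivAt y y' t) :
    HasDerivAt (fun s => dot (x s) (y s)) (dot x' (y t) + dot (x t) y') t := by
  have hxy : ∀ i, HasDerivAt (fun s => x s i * y s i) (x' i * y t i + x t i * y' i) t :=
    fun i => (hasDerivAt_pi.mp hx i).mul (hasDerivAt_pi.mp hy i)
  simpa only [dot, Finset.sum_add_distrib] using HasDerivAt.fun_sum fun i _ => hxy i

def generalizedEnergy (L : (Fin k → ℝ) × (Fin k → ℝ) → ℝ) (q v p : Fin k → ℝ) : ℝ :=
  dot p v - L (q, v)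

lemma hasDerivAt_lagrangian_comp {L : (Fin k → ℝ) × (Fin k → ℝ) → ℝ}
    {f : ((Fin k → ℝ) × (Fin k → ℝ)) →L[ℝ] ℝ} {gq gv : Fin k → ℝ}
    {q v : ℝ → Fin k → ℝ} {q' v' : Fin k → ℝ} {t : ℝ}
    (hL : HasFDerivAt L f (q t, v t)) (hf : ∀ ab, f ab = dot gq ab.1 + dot gv ab.2)
    (hq : HasDerivAt q q' t) (hv : HasDerivAt v v' t) :
    HasDerivAt (fun s => L (q s, v s)) (dot gq q' + dot gv v') t := by
  have h := hL.comp_hasDerivAt t (hq.prodMk hv)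
  rwa [hf] at h

lemma hasDerivAt_generalizedEnergy {L : (Fin k → ℝ) × (Fin k → ℝ) → ℝ}
    {f : ((Fin k → ℝ) × (Fin k → ℝ)) →L[ℝ] ℝ} {gq gv : Fin k → ℝ}
    {q v p : ℝ → Fin k → ℝ} {v' p' : Fin k → ℝ} {t : ℝ}
    (hL : HasFDerivAt L f (q t, v t)) (hf : ∀ ab, f ab = dot gq ab.1 + dot gv ab.2)
    (hq : HasDerivAt q (v t) t) (hv : HasDerivAt v v' t) (hp : HasDerivAt p p' t) :
    HasDerivAt (fun s => generalizedEnergy L (q s) (v s) (p s))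
      (dot (p' - gq) (v t) + dot (p t - gv) v') t := by
  refine ((hasDerivAt_dot hp hv).sub (hasDerivAt_lagrangian_comp hL hf hq hv)).congr_deriv ?_
  rw [sub_dot, sub_dot]
  ring

end

/-- energy conservation for Lagrange-Dirac systems.  If the
differentiable curves `(q,v,p)` satisfy the implicit Lagrange-d'Alembert
equations for a differentiable Lagrangian `L` (with partial gradients `Lq, Lv`)
and a distribution `Δ`, then the generalized energy `E = p·v − L(q,v)` is
constant along the motion. -/
theorem energy_conservation {n : ℕ}
    (L : (Fin n → ℝ) × (Fin n → ℝ) → ℝ)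
    (Lq Lv : (Fin n → ℝ) × (Fin n → ℝ) → Fin n → ℝ)
    (hL : ∀ x : (Fin n → ℝ) × (Fin n → ℝ),
      ∃ f : ((Fin n → ℝ) × (Fin n → ℝ)) →L[ℝ] ℝ,
        HasFDerivAt L f x ∧
        ∀ ab : (Fin n → ℝ) × (Fin n → ℝ), f ab = dot (Lq x) ab.1 + dot (Lv x) ab.2)
    (Δ : (Fin n → ℝ) → Submodule ℝ (Fin n → ℝ))
    (q v p q' v' p' : ℝ → Fin n → ℝ)
    (hq : ∀ t, HasDerivAt q (q' t) t)
    (hv : ∀ t, HasDerivAt v (v' t) t)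
    (hp : ∀ t, HasDerivAt p (p' t) t)
    (h1 : ∀ t, p t = Lv (q t, v t))
    (h2 : ∀ t, q' t = v t)
    (h3 : ∀ t, v t ∈ Δ (q t))
    (h4 : ∀ t, ∀ u ∈ Δ (q t), dot (p' t - Lq (q t, v t)) u = 0) :
    ∀ s t : ℝ,
      dot (p s) (v s) - L (q s, v s) = dot (p t) (v t) - L (q t, v t) := by
  have hE : ∀ t, HasDerivAt (fun s => generalizedEnergy L (q s) (v s) (p s)) 0 t := by
    intro t
    obtain ⟨f, hfL, hf⟩ := hL (q t, v t)
    have hE' := hasDerivAt_generalizedEnergy hfL hf (h2 t ▸ hq t) (hv t) (hp t)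
    rwa [h4 t (v t) (h3 t), h1 t, sub_self, dot_eq_dotProduct, zero_dotProduct, add_zero] at hE'
  exact is_const_of_deriv_eq_zero (fun t => (hE t).differentiableAt) (fun t => (hE t).deriv)
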